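/- Identify ℝ² with ℂ. Let a ∈ ℂ with Im a > 0, let r = Im a, let z = Re a (the point where the circle C = {w ∈ ℂ : |w−a| = r} is tangent to the real axis), and let α ∈ (0,π). Suppose x, y, x', y' ∈ C \ {z} satisfy ∠(x,z,y) = ∠(x',z,y') = α and |x'−z| = |y'−z|. Then Im(x)·Im(y) ≤ Im(x')·Im(y'). -/

import Mathlib

open EuclideanGeometry Real Set

/-!
Move the tangency point to `0`: a point `u` of the circle then satisfies `‖u‖² = 2 r Im u`, so
`(2r)² Im u Im v = (‖u‖ ‖v‖)²` and it suffices to compare the products `‖u‖ ‖v‖`. If `u` and `v`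
are seen from `0` under the angle `θ`, the chord `u - v` has length `2 r sin θ` (inscribed angle
theorem), so by the law of cosines `‖u‖² + ‖v‖² - 2 ‖u‖ ‖v‖ cos θ = 4 r² sin² θ`. Together with
`2 ‖u‖ ‖v‖ ≤ ‖u‖² + ‖v‖²` this gives `‖u‖ ‖v‖ ≤ 2 r² (1 + cos θ)`, with equality when `‖u‖ = ‖v‖`.
-/

namespace TangentCircle

variable {r : ℝ} {u v : ℂ}

lemma im_ne_zero (hu : ‖u‖ ^ 2 = 2 * r * u.im) (hu0 : u ≠ 0) : u.im ≠ 0 := by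
  rintro h
  rw [h, mul_zero, sq_eq_zero_iff, norm_eq_zero] at hu
  exact hu0 hu

lemma sq_norm_mul_norm (hu : ‖u‖ ^ 2 = 2 * r * u.im) (hv : ‖v‖ ^ 2 = 2 * r * v.im) :
    (‖u‖ * ‖v‖) ^ 2 = (2 * r) ^ 2 * (u.im * v.im) := by
  rw [mul_pow, hu, hv]
  ring

lemma norm_sub_sq_eq_sq_two_mul_sin_angle (hu : ‖u‖ ^ 2 = 2 * r * u.im)
    (hv : ‖v‖ ^ 2 = 2 * r * v.im) (hu0 : u ≠ 0) (hv0 : v ≠ 0) :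
    ‖u - v‖ ^ 2 = (2 * r * sin (InnerProductGeometry.angle u v)) ^ 2 := by
  have hpq := mul_ne_zero (im_ne_zero hu hu0) (im_ne_zero hv hv0)
  have hm : (‖u‖ * ‖v‖) ^ 2 = 2 * r * u.im * (2 * r * v.im) := by rw [mul_pow, hu, hv]
  have hcos := InnerProductGeometry.cos_angle_mul_norm_mul_norm u v
  rw [Complex.inner] at hcos
  rw [Complex.sq_norm, Complex.normSq_apply] at hu hv
  rw [mul_pow, sin_sq, Complex.sq_norm, Complex.normSq_apply]
  simp only [Complex.mul_re, Complex.conj_re, Complex.conj_im, Complex.sub_re,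
    Complex.sub_im] at hcos ⊢
  apply mul_left_cancel₀ hpq
  -- Lagrange's identity `‖u‖² ‖v‖² = ⟪u, v⟫² + (u × v)²`, with `Im u · Im v · ‖u - v‖² = (u × v)²`
  -- on the circle.
  linear_combination (u.im * v.im + v.re ^ 2) * hu + (u.im * v.im + 2 * r * u.im - u.im ^ 2) * hv
    + (cos (InnerProductGeometry.angle u v) * (‖u‖ * ‖v‖) + u.re * v.re + u.im * v.im) * hcos
    - cos (InnerProductGeometry.angle u v) ^ 2 * hm

lemma norm_mul_norm_le (hu : ‖u‖ ^ 2 = 2 * r * u.im) (hv : ‖v‖ ^ 2 = 2 * r * v.im)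
    (hu0 : u ≠ 0) (hv0 : v ≠ 0) (hc : cos (InnerProductGeometry.angle u v) < 1) :
    ‖u‖ * ‖v‖ ≤ 2 * r ^ 2 * (1 + cos (InnerProductGeometry.angle u v)) := by
  have hchord := norm_sub_sq_eq_sq_two_mul_sin_angle hu hv hu0 hv0
  have hlaw :=
    InnerProductGeometry.norm_sub_sq_eq_norm_sq_add_norm_sq_sub_two_mul_norm_mul_norm_mul_cos_angle
      u v
  rw [mul_pow, sin_sq] at hchord
  refine le_of_mul_le_mul_left ?_ (sub_pos.2 hc)
  linarith [two_mul_le_add_sq ‖u‖ ‖v‖]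

lemma norm_mul_norm_eq_of_norm_eq (hu : ‖u‖ ^ 2 = 2 * r * u.im) (hv : ‖v‖ ^ 2 = 2 * r * v.im)
    (hu0 : u ≠ 0) (hv0 : v ≠ 0) (hc : cos (InnerProductGeometry.angle u v) < 1)
    (huv : ‖u‖ = ‖v‖) :
    ‖u‖ * ‖v‖ = 2 * r ^ 2 * (1 + cos (InnerProductGeometry.angle u v)) := by
  have hchord := norm_sub_sq_eq_sq_two_mul_sin_angle hu hv hu0 hv0
  have hlaw :=
    InnerProductGeometry.norm_sub_sq_eq_norm_sq_add_norm_sq_sub_two_mul_norm_mul_norm_mul_cos_angle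
      u v
  rw [mul_pow, sin_sq] at hchord
  refine mul_left_cancel₀ (sub_pos.2 hc).ne' ?_
  rw [← huv] at hlaw ⊢
  linear_combination (hchord - hlaw) / 2

end TangentCircle

lemma norm_sub_re_sq_of_mem_sphere {a w : ℂ} (hw : w ∈ Metric.sphere a a.im) :
    ‖w - a.re‖ ^ 2 = 2 * a.im * (w - a.re).im := by
  have h : ‖w - a‖ ^ 2 = a.im ^ 2 := by rw [← mem_sphere_iff_norm.1 hw]
  simp only [Complex.sq_norm, Complex.normSq_apply, Complex.sub_re, Complex.sub_im,
    Complex.ofReal_re, Complex.ofReal_im] at h ⊢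
  linear_combination h

theorem stmt19 (a : ℂ) (ha : 0 < a.im)
    (α : ℝ) (hα : α ∈ Set.Ioo 0 π) (x y x' y' : ℂ)
    (hx : x ∈ Metric.sphere a a.im)
    (hy : y ∈ Metric.sphere a a.im)
    (hx' : x' ∈ Metric.sphere a a.im)
    (hy' : y' ∈ Metric.sphere a a.im)
    (hxz : x ≠ (a.re : ℂ)) (hyz : y ≠ (a.re : ℂ))
    (hx'z : x' ≠ (a.re : ℂ)) (hy'z : y' ≠ (a.re : ℂ))
    (hang : EuclideanGeometry.angle x ((a.re : ℂ)) y = α)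
    (hang' : EuclideanGeometry.angle x' ((a.re : ℂ)) y' = α)
    (hsym : ‖x' - (a.re : ℂ)‖ = ‖y' - (a.re : ℂ)‖) :
    x.im * y.im ≤ x'.im * y'.im := by
  have hu := norm_sub_re_sq_of_mem_sphere hx
  have hv := norm_sub_re_sq_of_mem_sphere hy
  have hu' := norm_sub_re_sq_of_mem_sphere hx'
  have hv' := norm_sub_re_sq_of_mem_sphere hy'
  have hθ : InnerProductGeometry.angle (x - a.re) (y - a.re) = α := hang
  have hθ' : InnerProductGeometry.angle (x' - a.re) (y' - a.re) = α := hang'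
  have hc : cos α < 1 := by simpa using cos_lt_cos_of_nonneg_of_le_pi le_rfl hα.2.le hα.1
  have hle := TangentCircle.norm_mul_norm_le hu hv (sub_ne_zero.2 hxz) (sub_ne_zero.2 hyz)
    (hθ ▸ hc)
  have heq := TangentCircle.norm_mul_norm_eq_of_norm_eq hu' hv' (sub_ne_zero.2 hx'z)
    (sub_ne_zero.2 hy'z) (hθ' ▸ hc) hsym
  rw [hθ] at hle
  rw [hθ'] at heq
  have hsq := pow_le_pow_left₀ (by positivity) (hle.trans heq.ge) 2
  rw [TangentCircle.sq_norm_mul_norm hu hv, TangentCircle.sq_norm_mul_norm hu' hv'] at hsq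
  simp only [Complex.sub_im, Complex.ofReal_im, sub_zero] at hsq
  exact le_of_mul_le_mul_left hsq (by positivity)
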